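/- Let W ⊆ E be a linear subspace that is stable under z and contained in im(z). Then the restriction of C to (z^{-1}W) ∩ W^⊥ is an isometric linear isomorphism onto ℂ², i.e. it is bijective onto ℂ² and satisfies ⟨C(v), C(w)⟩ = ⟨v, w⟩_E for all v, w ∈ (z^{-1}W) ∩ W^⊥. -/

import Mathlib

open scoped ComplexInnerProductSpace

noncomputable section

abbrev E (N : ℕ) := EuclideanSpace ℂ (Fin N ⊕ Fin N)

def zmap (N : ℕ) : E N →ₗ[ℂ] E N where
  toFun v := WithLp.toLp 2 (fun i =>
    match i with
    | Sum.inl j => if h : (j : ℕ) + 1 < N then v (Sum.inl ⟨(j : ℕ) + 1, h⟩) else 0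
    | Sum.inr j => if h : (j : ℕ) + 1 < N then v (Sum.inr ⟨(j : ℕ) + 1, h⟩) else 0)
  map_add' u v := by
    ext i
    rcases i with j | j <;> simp only [PiLp.add_apply, PiLp.toLp_apply] <;> split <;> simp
  map_smul' c v := by
    ext i
    rcases i with j | j <;> simp only [PiLp.smul_apply, PiLp.toLp_apply, RingHom.id_apply, smul_eq_mul] <;>
      split <;> simp

def Cmap (N : ℕ) : E N →ₗ[ℂ] EuclideanSpace ℂ (Fin 2) where
  toFun v := WithLp.toLp 2 (fun i : Fin 2 => if i = 0 then ∑ j : Fin N, v (Sum.inl j) else ∑ j : Fin N, v (Sum.inr j))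
  map_add' u v := by
    ext i
    by_cases h : i = (0 : Fin 2) <;> simp [h, PiLp.add_apply, Finset.sum_add_distrib]
  map_smul' c v := by
    ext i
    by_cases h : i = (0 : Fin 2) <;> simp [h, PiLp.smul_apply, Finset.mul_sum]

/-- `Ym N m` : complete flags `0 = L_0 ⊊ L_1 ⊊ … ⊊ L_m` of `z`-stable subspaces of `E`
with `dim L_j = j`.  A tuple `(L_1,…,L_m) ∈ Y_m` is encoded as the function
`L : Fin (m+1) → Submodule ℂ (E N)` with the convention `L 0 = 0`. -/
def Ym (N m : ℕ) : Set (Fin (m + 1) → Submodule ℂ (E N)) :=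
  {L | L 0 = ⊥ ∧ StrictMono L ∧ (∀ j : Fin (m + 1), Module.finrank ℂ (L j) = (j : ℕ)) ∧
    ∀ j : Fin (m + 1), (L j).map (zmap N) ≤ L j}

/-- The map `φ_m`, in coordinates: `φ_m(L)_j = C(L_{j+1} ∩ L_j^⊥)` (0-based `j`),
i.e. the tuple `(C(L_1), C(L_2 ∩ L_1^⊥), …, C(L_m ∩ L_{m-1}^⊥))`. -/
def phiRaw (N m : ℕ) (L : Fin (m + 1) → Submodule ℂ (E N)) :
    Fin m → Submodule ℂ (EuclideanSpace ℂ (Fin 2)) :=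
  fun j => ((L j.succ) ⊓ (L j.castSucc)ᗮ).map (Cmap N)

/-- `X_{m,i} = {(L_1,…,L_m) ∈ Y_m : L_{i+1} = z^{-1}(L_{i-1})}` (with `L_0 = 0`). -/
def Xmi (N m i : ℕ) : Set (Fin (m + 1) → Submodule ℂ (E N)) :=
  {L | L ∈ Ym N m ∧ ∀ (h : i + 1 < m + 1) (h' : i - 1 < m + 1),
    L ⟨i + 1, h⟩ = (L ⟨i - 1, h'⟩).comap (zmap N)}

/-- `A_{m,i} = {(l_1,…,l_m) ∈ (ℙ¹)^m : l_{i+1} = l_i^⊥}`; a point of `(ℙ¹)^m` is encoded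
as a tuple of rank-one subspaces of `ℂ²`, the line `l_k` sitting at 0-based index `k-1`. -/
def Ami (m i : ℕ) : Set (Fin m → Submodule ℂ (EuclideanSpace ℂ (Fin 2))) :=
  {l | (∀ j, Module.finrank ℂ (l j) = 1) ∧
    ∀ (h : i < m) (h' : i - 1 < m), l ⟨i, h⟩ = (l ⟨i - 1, h'⟩)ᗮ}

/-- `q_{m,i}(L_1,…,L_m) = (L_1,…,L_{i-1}, zL_{i+2},…,zL_m)`. -/
def qRaw (N m i : ℕ) (hm : 2 ≤ m) (L : Fin (m + 1) → Submodule ℂ (E N)) :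
    Fin (m - 2 + 1) → Submodule ℂ (E N) :=
  fun j =>
    if (j : ℕ) < i then L ⟨(j : ℕ), by have := j.isLt; omega⟩
    else (L ⟨(j : ℕ) + 2, by have := j.isLt; omega⟩).map (zmap N)

/-- The forgetful map `g_{m,i}(l_1,…,l_m) = (l_1,…,l_{i-1}, l_{i+2},…,l_m)`. -/
def gRaw (m i : ℕ) (l : Fin m → Submodule ℂ (EuclideanSpace ℂ (Fin 2))) :
    Fin (m - 2) → Submodule ℂ (EuclideanSpace ℂ (Fin 2)) :=
  fun k =>
    if (k : ℕ) + 1 < i then l ⟨(k : ℕ), by have := k.isLt; omega⟩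
    else l ⟨(k : ℕ) + 2, by have := k.isLt; omega⟩

/-- The involution `I_{2n}` of `(ℙ¹)^m`: `l_j ↦ l_j` for `j` odd, `l_j ↦ l_j^⊥` for `j` even
(the line `l_j` sits at 0-based index `j-1`). -/
def Imap (m : ℕ) (l : Fin m → Submodule ℂ (EuclideanSpace ℂ (Fin 2))) :
    Fin m → Submodule ℂ (EuclideanSpace ℂ (Fin 2)) :=
  fun k => if (k : ℕ) % 2 = 0 then l k else (l k)ᗮ

/-- A crossingless matching of the `2n` points `{1,…,2n}`: a partition of `{1,…,2n}` into
`n` pairs (each pair recorded as `(i,j)` with `i < j`) such that there is no quadruple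
`i < j < k < l` with `(i,k)` and `(j,l)` paired. -/
structure CrossinglessMatching (n : ℕ) where
  pairs : Finset (ℕ × ℕ)
  card_eq : pairs.card = n
  lt : ∀ p ∈ pairs, p.1 < p.2
  mem_range : ∀ p ∈ pairs, 1 ≤ p.1 ∧ p.2 ≤ 2 * n
  cover : ∀ k, 1 ≤ k → k ≤ 2 * n → ∃! p, p ∈ pairs ∧ (p.1 = k ∨ p.2 = k)
  noncross : ∀ i j k l : ℕ, i < j → j < k → k < l → (i, k) ∈ pairs → (j, l) ∉ pairs

/-- `{(L_1,…,L_m) ∈ Y_m : L_{s_a(j)} = z^{-d_a(j)} L_{j-1} for all j ∈ O_a}`, where for a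
pair `(i,j)` of the matching, `s_a(i) = j`, `d_a(i) = (j-i+1)/2`, and `z^{-d}` is the
`d`-fold preimage under `z`. -/
def KaSet (N m : ℕ) (pairs : Finset (ℕ × ℕ)) : Set (Fin (m + 1) → Submodule ℂ (E N)) :=
  {L | L ∈ Ym N m ∧ ∀ p ∈ pairs,
    L (Fin.ofNat (m + 1) p.2) =
      (L (Fin.ofNat (m + 1) (p.1 - 1 : ℕ))).comap ((zmap N) ^ ((p.2 - p.1 + 1) / 2))}

/-- `S_a = {(l_1,…,l_{2n}) ∈ (ℙ¹)^{2n} : l_{s_a(j)} = l_j ∀ j ∈ O_a}` (0-based indexing, so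
`l_k` sits at index `k-1`). -/
def SaSet (m : ℕ) (pairs : Finset (ℕ × ℕ)) :
    Set (Fin m → Submodule ℂ (EuclideanSpace ℂ (Fin 2))) :=
  {l | (∀ j, Module.finrank ℂ (l j) = 1) ∧
    ∀ p ∈ pairs, ∀ (h2 : p.2 - 1 < m) (h1 : p.1 - 1 < m), l ⟨p.2 - 1, h2⟩ = l ⟨p.1 - 1, h1⟩}

/-- `T_a = {(l_1,…,l_{2n}) ∈ (ℙ¹)^{2n} : l_{s_a(j)} = l_j^⊥ ∀ j ∈ O_a}`. -/
def TaSet (m : ℕ) (pairs : Finset (ℕ × ℕ)) :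
    Set (Fin m → Submodule ℂ (EuclideanSpace ℂ (Fin 2))) :=
  {l | (∀ j, Module.finrank ℂ (l j) = 1) ∧
    ∀ p ∈ pairs, ∀ (h2 : p.2 - 1 < m) (h1 : p.1 - 1 < m), l ⟨p.2 - 1, h2⟩ = (l ⟨p.1 - 1, h1⟩)ᗮ}

/-!
Let `U = z + z² + ⋯ + z^N`. On each block `Cᴴ C` is the all-ones matrix, i.e. `1 + U + Uᴴ`, so
`⟪C v, C w⟫ = ⟪v, w⟫ + ⟪U v, w⟫ + ⟪v, U w⟫`. If `z v ∈ W` then `U v ∈ W` because `W` is `z`-stable,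
so on `z⁻¹ W ∩ Wᗮ` both correction terms vanish and `C` is isometric, hence injective.
Since `W ⊆ im z`, `dim z⁻¹ W = dim W + dim ker z ≥ dim W + 2`, while `dim Wᗮ = 2N - dim W`;
so `z⁻¹ W ∩ Wᗮ` has dimension at least `2 = dim ℂ²` and `C` maps it bijectively onto `ℂ²`.
-/

open Finset Module

theorem sum_mul_sum_eq_sum_mul_add_sum_Ioi {α R : Type*} [LinearOrder α] [Fintype α]
    [LocallyFiniteOrderTop α] [LocallyFiniteOrderBot α] [CommSemiring R] (a b : α → R) :
    (∑ k, a k) * ∑ k, b k =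
      ∑ j, a j * b j + ∑ j, (∑ k ∈ Ioi j, a k) * b j + ∑ j, a j * ∑ k ∈ Ioi j, b k := by
  rw [sum_mul_sum, sum_comm, sum_congr rfl fun j _ => Fintype.sum_eq_add_sum_compl j _,
    sum_add_distrib, ← sum_sum_Ioi_add_eq_sum_sum_off_diag, add_assoc]
  simp_rw [sum_add_distrib, sum_mul, mul_sum]

theorem Fin.sum_Ioi_eq_sum_range {M : Type*} [AddCommMonoid M] {N : ℕ} (c : Fin N → M)
    (j : Fin N) :
    ∑ k ∈ Ioi j, c k = ∑ d ∈ range N, if h : j + (d + 1) < N then c ⟨j + (d + 1), h⟩ else 0 := by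
  set g : ℕ → M := fun m => if h : m < N then c ⟨m, h⟩ else 0
  have hc : ∀ k : Fin N, c k = g (Fin.valEmbedding k) := fun k => by simp [g]
  rw [sum_congr rfl fun k _ => hc k, ← sum_map _ Fin.valEmbedding g, Fin.map_valEmbedding_Ioi,
    ← Finset.Ico_succ_left_eq_Ioo, Order.succ_eq_add_one, sum_Ico_eq_sum_range]
  calc _ = ∑ d ∈ range N, g (j + 1 + d) :=
        sum_subset (range_subset_range.2 (Nat.sub_le _ _)) fun d _ hd => by
          simp only [mem_range] at hd
          simp [g]; omega
    _ = _ := sum_congr rfl fun d _ => by rw [add_assoc, add_comm 1 d]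

theorem finrank_comap_eq_of_le_range {K V V' : Type*} [Field K] [AddCommGroup V] [Module K V]
    [AddCommGroup V'] [Module K V'] [FiniteDimensional K V] (f : V →ₗ[K] V')
    {W : Submodule K V'} (hW : W ≤ LinearMap.range f) :
    finrank K (W.comap f) = finrank K W + finrank K (LinearMap.ker f) := by
  have h := LinearMap.finrank_range_add_finrank_ker (f.domRestrict (W.comap f))
  rwa [LinearMap.range_domRestrict, Submodule.map_comap_eq, inf_eq_right.2 hW,
    LinearMap.ker_domRestrict,
    (Submodule.comapSubtypeEquivOfLe (LinearMap.ker_le_comap f)).finrank_eq, eq_comm] at h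

section InnerProductSpace

variable {𝕜 V : Type*} [RCLike 𝕜] [NormedAddCommGroup V] [InnerProductSpace 𝕜 V]
  [FiniteDimensional 𝕜 V]

theorem finrank_ker_le_finrank_comap_inf_orthogonal (f : V →ₗ[𝕜] V) {W : Submodule 𝕜 V}
    (hW : W ≤ LinearMap.range f) : finrank 𝕜 (LinearMap.ker f) ≤ finrank 𝕜 ↥(W.comap f ⊓ Wᗮ) := by
  have hcomap := finrank_comap_eq_of_le_range f hW
  have horth := W.finrank_add_finrank_orthogonal
  have hsup := Submodule.finrank_sup_add_finrank_inf_eq (W.comap f) Wᗮ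
  have hle := (W.comap f ⊔ Wᗮ).finrank_le
  omega

theorem bijective_domRestrict_of_inner_map_map {V' : Type*} [NormedAddCommGroup V']
    [InnerProductSpace 𝕜 V'] [FiniteDimensional 𝕜 V'] (f : V →ₗ[𝕜] V') {K : Submodule 𝕜 V}
    (hf : ∀ v w : V, v ∈ K → w ∈ K → inner 𝕜 (f v) (f w) = inner 𝕜 v w)
    (hK : finrank 𝕜 V' ≤ finrank 𝕜 K) : Function.Bijective (f.domRestrict K) := by
  have hinj : Function.Injective (f.domRestrict K) := by
    refine (injective_iff_map_eq_zero _).2 fun v hv => Subtype.ext (inner_self_eq_zero (𝕜 := 𝕜).1 ?_)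
    rw [← hf v v v.2 v.2]
    simp only [LinearMap.domRestrict_apply] at hv
    simp [hv]
  refine ⟨hinj, (LinearMap.injective_iff_surjective_of_finrank_eq_finrank ?_).1 hinj⟩
  exact le_antisymm (LinearMap.finrank_le_finrank_of_injective hinj) hK

end InnerProductSpace

section ZMap

variable {N : ℕ}

theorem zmap_pow_apply_inl (d : ℕ) (v : E N) (j : Fin N) :
    (zmap N ^ d) v (Sum.inl j) = if h : j + d < N then v (Sum.inl ⟨j + d, h⟩) else 0 := by
  induction d generalizing v with
  | zero => simp
  | succ d ih =>
    rw [pow_succ, Module.End.mul_apply, ih]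
    show (if h : j + d < N then (if h' : j + d + 1 < N then _ else 0) else 0) = _
    split_ifs <;> first | rfl | omega

theorem zmap_pow_apply_inr (d : ℕ) (v : E N) (j : Fin N) :
    (zmap N ^ d) v (Sum.inr j) = if h : j + d < N then v (Sum.inr ⟨j + d, h⟩) else 0 := by
  induction d generalizing v with
  | zero => simp
  | succ d ih =>
    rw [pow_succ, Module.End.mul_apply, ih]
    show (if h : j + d < N then (if h' : j + d + 1 < N then _ else 0) else 0) = _
    split_ifs <;> first | rfl | omega

theorem zmap_single_eq_zero {i : Fin N ⊕ Fin N} (hi : i.elim Fin.val Fin.val = 0) :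
    zmap N (EuclideanSpace.single i 1) = 0 := by
  ext (j | j) <;> rcases i with i | i <;> simp_all [zmap, Fin.ext_iff]

theorem two_le_finrank_ker_zmap (hN : 1 ≤ N) : 2 ≤ finrank ℂ (LinearMap.ker (zmap N)) := by
  set i₀ : Fin N := ⟨0, hN⟩
  let b : Fin 2 → E N := (EuclideanSpace.basisFun _ ℂ).toBasis ∘ ![Sum.inl i₀, Sum.inr i₀]
  have hb : LinearIndependent ℂ b := (EuclideanSpace.basisFun _ ℂ).toBasis.linearIndependent.comp _
    (by intro a c; fin_cases a <;> fin_cases c <;> simp)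
  have hker : Submodule.span ℂ (Set.range b) ≤ LinearMap.ker (zmap N) := by
    rw [Submodule.span_le]
    rintro - ⟨k, rfl⟩
    fin_cases k <;> simpa [b] using zmap_single_eq_zero rfl
  simpa [finrank_span_eq_card hb] using Submodule.finrank_mono hker

def zsum (N : ℕ) : E N →ₗ[ℂ] E N := ∑ d ∈ range N, zmap N ^ (d + 1)

theorem zsum_apply_inl (v : E N) (j : Fin N) :
    zsum N v (Sum.inl j) = ∑ k ∈ Ioi j, v (Sum.inl k) := by
  simp [zsum, zmap_pow_apply_inl, Fin.sum_Ioi_eq_sum_range]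

theorem zsum_apply_inr (v : E N) (j : Fin N) :
    zsum N v (Sum.inr j) = ∑ k ∈ Ioi j, v (Sum.inr k) := by
  simp [zsum, zmap_pow_apply_inr, Fin.sum_Ioi_eq_sum_range]

theorem zsum_mem {W : Submodule ℂ (E N)} (hW : W.map (zmap N) ≤ W) {v : E N}
    (hv : zmap N v ∈ W) : zsum N v ∈ W := by
  rw [zsum, LinearMap.sum_apply]
  refine W.sum_mem fun d _ => ?_
  rw [pow_succ, Module.End.mul_apply]
  exact Module.End.pow_apply_mem_of_forall_mem d (fun x hx => hW (Submodule.mem_map_of_mem hx)) _ hv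

theorem inner_cmap_cmap (v w : E N) :
    ⟪Cmap N v, Cmap N w⟫ = ⟪v, w⟫ + ⟪zsum N v, w⟫ + ⟪v, zsum N w⟫ := by
  simp only [PiLp.inner_apply, RCLike.inner_apply', Fintype.sum_sum_type, Fin.sum_univ_two,
    zsum_apply_inl, zsum_apply_inr, Cmap, LinearMap.coe_mk, AddHom.coe_mk, Fin.isValue,
    ↓reduceIte, one_ne_zero, map_sum, sum_mul_sum_eq_sum_mul_add_sum_Ioi]
  ring

theorem inner_cmap_cmap_of_mem {W : Submodule ℂ (E N)} (hW : W.map (zmap N) ≤ W) {v w : E N}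
    (hv : v ∈ W.comap (zmap N) ⊓ Wᗮ) (hw : w ∈ W.comap (zmap N) ⊓ Wᗮ) :
    ⟪Cmap N v, Cmap N w⟫ = ⟪v, w⟫ := by
  rw [inner_cmap_cmap, Submodule.inner_right_of_mem_orthogonal (zsum_mem hW hv.1) hw.2,
    Submodule.inner_left_of_mem_orthogonal (zsum_mem hW hw.1) hv.2, add_zero, add_zero]

end ZMap

theorem cmap_isometric_bijective (N : ℕ) (hN : 1 ≤ N)
    (W : Submodule ℂ (E N)) (hstab : W.map (zmap N) ≤ W)
    (him : W ≤ LinearMap.range (zmap N)) :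
    Function.Bijective (fun v : ↥(W.comap (zmap N) ⊓ Wᗮ) => Cmap N (v : E N)) ∧
    ∀ v w : E N, v ∈ W.comap (zmap N) ⊓ Wᗮ → w ∈ W.comap (zmap N) ⊓ Wᗮ →
      ⟪Cmap N v, Cmap N w⟫ = ⟪v, w⟫ := by
  have hisom : ∀ v w : E N, v ∈ W.comap (zmap N) ⊓ Wᗮ → w ∈ W.comap (zmap N) ⊓ Wᗮ →
      ⟪Cmap N v, Cmap N w⟫ = ⟪v, w⟫ := fun _ _ hv hw => inner_cmap_cmap_of_mem hstab hv hw
  refine ⟨bijective_domRestrict_of_inner_map_map (Cmap N) hisom ?_, hisom⟩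
  calc finrank ℂ (EuclideanSpace ℂ (Fin 2)) = 2 := by simp
    _ ≤ finrank ℂ (LinearMap.ker (zmap N)) := two_le_finrank_ker_zmap hN
    _ ≤ _ := finrank_ker_le_finrank_comap_inf_orthogonal _ him
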